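/- arXiv:1407.6670 — 4 statements merged into one kernel-verified Lean document; each statement's English description precedes it below -/
import Mathlib

section
/- Let p be an odd prime, φ the quadratic character of F_p (extended by φ(0)=0), and χ any multiplicative character of F_p. Then g(φχ)·g(χ) = g(χ²)·g(φ)·χ⁻¹(4), where g denotes the Gauss sum. (This is the m=2 case of the Hasse–Davenport product formula.) -/
open Finset MulChar

section aux

variable {p : ℕ} [Fact p.Prime]

private lemma hd_two_ne_zero (hp2 : ringChar (ZMod p) ≠ 2) : (2 : ZMod p) ≠ 0 :=
  Ring.two_ne_zero hp2

private lemma hd_four_ne_zero (hp2 : ringChar (ZMod p) ≠ 2) : (4 : ZMod p) ≠ 0 := by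
  have h2 := hd_two_ne_zero (p := p) hp2
  have h : (4 : ZMod p) = 2 * 2 := by norm_num
  rw [h]
  exact mul_ne_zero h2 h2

/-- Uniqueness of the quadratic character. -/
private lemma hd_eq_quadChar (hp2 : ringChar (ZMod p) ≠ 2) {χ : MulChar (ZMod p) ℂ}
    (h1 : χ ≠ 1) (h2 : χ ^ 2 = 1) :
    χ = (quadraticChar (ZMod p)).ringHomComp (Int.castRingHom ℂ) := by
  set φ : MulChar (ZMod p) ℂ := (quadraticChar (ZMod p)).ringHomComp (Int.castRingHom ℂ) with hφdef
  obtain ⟨e⟩ := MulChar.mulEquiv_units (ZMod p) ℂ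
  have key : ∀ ψ : MulChar (ZMod p) ℂ, ψ ≠ 1 → ψ ^ 2 = 1 → e ψ = -1 := by
    intro ψ hψ1 hψ2
    have hsq : (e ψ) ^ 2 = 1 := by rw [← map_pow, hψ2, map_one]
    have hval : ((e ψ : (ZMod p)ˣ) : ZMod p) * ((e ψ : (ZMod p)ˣ) : ZMod p) = 1 := by
      rw [← Units.val_mul, ← pow_two, hsq, Units.val_one]
    rcases mul_self_eq_one_iff.mp hval with h | h
    · exfalso
      apply hψ1
      apply e.injective
      rw [map_one]
      ext
      exact h
    · ext
      rw [h, Units.val_neg, Units.val_one]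
  have hφ1 : φ ≠ 1 :=
    (MulChar.ringHomComp_ne_one_iff (RingHom.injective_int _)).mpr (quadraticChar_ne_one hp2)
  have hφ2 : φ ^ 2 = 1 := ((quadraticChar_isQuadratic (ZMod p)).comp _).sq_eq_one
  exact e.injective ((key χ h1 h2).trans (key φ hφ1 hφ2).symm)

/-- The key Jacobi sum identity: `J(χ,χ) = χ⁻¹(4) * J(φ,χ)`. -/
private lemma hd_jacobi_key (hp2 : ringChar (ZMod p) ≠ 2) {χ : MulChar (ZMod p) ℂ}
    (hχ : χ ≠ 1) :
    jacobiSum χ χ = χ⁻¹ 4 *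
      jacobiSum ((quadraticChar (ZMod p)).ringHomComp (Int.castRingHom ℂ)) χ := by
  classical
  set φ : MulChar (ZMod p) ℂ := (quadraticChar (ZMod p)).ringHomComp (Int.castRingHom ℂ) with hφdef
  have h2 : (2 : ZMod p) ≠ 0 := hd_two_ne_zero hp2
  have h4 : (4 : ZMod p) ≠ 0 := hd_four_ne_zero hp2
  -- Step 1: J(χ,χ) = ∑ x, χ (x * (1 - x))
  have step1 : jacobiSum χ χ = ∑ x : ZMod p, χ (x * (1 - x)) := by
    unfold jacobiSum
    simp_rw [← map_mul]
  -- Step 2: reindex x = (y + 1) / 2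
  have step2 : (∑ x : ZMod p, χ (x * (1 - x)))
      = ∑ y : ZMod p, χ ((1 - y ^ 2) * 4⁻¹) := by
    rw [← Equiv.sum_comp ((Equiv.addRight (1 : ZMod p)).trans
      (Equiv.mulRight₀ (2 : ZMod p)⁻¹ (inv_ne_zero h2))) (fun x => χ (x * (1 - x)))]
    refine Finset.sum_congr rfl fun y _ => ?_
    congr 1
    simp only [Equiv.trans_apply, Equiv.coe_addRight, Equiv.mulRight₀_apply]
    field_simp
    ring
  -- Step 3: pull out χ⁻¹ 4
  have step3 : (∑ y : ZMod p, χ ((1 - y ^ 2) * 4⁻¹))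
      = χ⁻¹ 4 * ∑ y : ZMod p, χ (1 - y ^ 2) := by
    rw [Finset.mul_sum]
    refine Finset.sum_congr rfl fun y _ => ?_
    rw [map_mul, MulChar.inv_apply' χ 4, mul_comm]
  -- Step 4: fiberwise over t = y ^ 2
  have step4 : (∑ y : ZMod p, χ (1 - y ^ 2))
      = ∑ t : ZMod p, ((quadraticChar (ZMod p) t : ℤ) + 1 : ℂ) * χ (1 - t) := by
    rw [← Finset.sum_fiberwise_of_maps_to' (fun y _ => Finset.mem_univ (y ^ 2))
      (fun t => χ (1 - t))]
    refine Finset.sum_congr rfl fun t _ => ?_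
    rw [Finset.sum_const, nsmul_eq_mul]
    congr 1
    have hcard := quadraticChar_card_sqrts hp2 t
    rw [Set.toFinset_setOf] at hcard
    exact_mod_cast hcard
  -- Step 5: split the sum
  have step5 : (∑ t : ZMod p, ((quadraticChar (ZMod p) t : ℤ) + 1 : ℂ) * χ (1 - t))
      = jacobiSum φ χ := by
    simp_rw [add_mul, one_mul, Finset.sum_add_distrib]
    have hz : (∑ t : ZMod p, χ (1 - t)) = 0 := by
      have he := Equiv.sum_comp (Equiv.subLeft (1 : ZMod p)) (fun u => χ u)
      simp only [Equiv.subLeft_apply] at he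
      rw [he]
      exact MulChar.sum_eq_zero_of_ne_one hχ
    rw [hz, add_zero, jacobiSum]
    rfl
  rw [step1, step2, step3, step4, step5]

end aux

theorem stmt_3 (p : ℕ) [Fact p.Prime] (hp : Odd p)
    (ζ : ℂ) (hζ : IsPrimitiveRoot ζ p)
    (χ : MulChar (ZMod p) ℂ) :
    letI φ : MulChar (ZMod p) ℂ := (quadraticChar (ZMod p)).ringHomComp (Int.castRingHom ℂ)
    (∑ x : ZMod p, (φ * χ) x * ζ ^ x.val) * (∑ x : ZMod p, χ x * ζ ^ x.val)
      = (∑ x : ZMod p, (χ ^ 2) x * ζ ^ x.val) * (∑ x : ZMod p, φ x * ζ ^ x.val)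
        * χ⁻¹ 4 := by
  set φ : MulChar (ZMod p) ℂ := (quadraticChar (ZMod p)).ringHomComp (Int.castRingHom ℂ)
    with hφdef
  have hp2 : ringChar (ZMod p) ≠ 2 := by
    rw [ZMod.ringChar_zmod_n]
    rw [Nat.odd_iff] at hp
    omega
  have h2 : (2 : ZMod p) ≠ 0 := hd_two_ne_zero hp2
  have h4 : (4 : ZMod p) ≠ 0 := hd_four_ne_zero hp2
  have h1 : ζ ^ p = 1 := hζ.pow_eq_one
  set ψ : AddChar (ZMod p) ℂ := AddChar.zmodChar p h1 with hψdef
  have hsum : ∀ χ' : MulChar (ZMod p) ℂ,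
      (∑ x : ZMod p, χ' x * ζ ^ x.val) = gaussSum χ' ψ := by
    intro χ'
    refine Finset.sum_congr rfl fun x _ => ?_
    rw [hψdef, AddChar.zmodChar_apply]
  rw [hsum, hsum, hsum, hsum]
  have hφ1 : φ ≠ 1 :=
    (MulChar.ringHomComp_ne_one_iff (RingHom.injective_int _)).mpr (quadraticChar_ne_one hp2)
  have hφq : φ.IsQuadratic := (quadraticChar_isQuadratic (ZMod p)).comp _
  have hφsq : φ ^ 2 = 1 := hφq.sq_eq_one
  by_cases hχ1 : χ = 1
  · subst hχ1
    have h4u : IsUnit (4 : ZMod p) := Ne.isUnit h4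
    rw [mul_one, one_pow, inv_one, MulChar.one_apply h4u, mul_one, mul_comm]
  by_cases hχφ : χ = φ
  · have hφ4 : φ⁻¹ 4 = 1 := by
      rw [hφq.inv, hφdef]
      have h42 : (4 : ZMod p) = 2 ^ 2 := by norm_num
      rw [h42, MulChar.ringHomComp_apply, quadraticChar_sq_one' h2]
      norm_num
    rw [hχφ, hφ4, mul_one, ← pow_two]
  -- main case
  have hχ2 : χ ^ 2 ≠ 1 := fun h => hχφ (hd_eq_quadChar hp2 hχ1 h)
  have hφχ : φ * χ ≠ 1 := by
    intro h
    apply hχφ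
    have : χ = φ⁻¹ := eq_inv_of_mul_eq_one_left (by rwa [mul_comm])
    rwa [hφq.inv] at this
  have hψprim : ψ.IsPrimitive := AddChar.zmodChar_primitive_of_primitive_root p hζ
  have hcard : (Fintype.card (ZMod p) : ℂ) ≠ 0 := by
    rw [ZMod.card]
    exact_mod_cast (Fact.out : p.Prime).ne_zero
  have hgχ : gaussSum χ ψ ≠ 0 := gaussSum_ne_zero_of_nontrivial hcard hχ1 hψprim
  have e1 : gaussSum (χ ^ 2) ψ * jacobiSum χ χ = gaussSum χ ψ * gaussSum χ ψ := by
    rw [pow_two]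
    exact jacobiSum_mul_nontrivial (by rwa [← pow_two]) ψ
  have e2 : gaussSum (φ * χ) ψ * jacobiSum φ χ = gaussSum φ ψ * gaussSum χ ψ :=
    jacobiSum_mul_nontrivial hφχ ψ
  have key : jacobiSum χ χ = χ⁻¹ 4 * jacobiSum φ χ := hd_jacobi_key hp2 hχ1
  apply mul_right_cancel₀ hgχ
  linear_combination (-(gaussSum (φ * χ) ψ)) * e1
    + (gaussSum (φ * χ) ψ * gaussSum (χ ^ 2) ψ) * key
    + (gaussSum (χ ^ 2) ψ * χ⁻¹ 4) * e2
end

section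
/- Let p be an odd prime, φ the quadratic character of F_p, and χ a nontrivial multiplicative character of F_p. Then g(φχ)·g(χ⁻¹)/g(φ) = Σ_{t=2}^{p-1} χ(t²/(4(1-t))), where the sum is over t ∈ F_p with t ≠ 0, 1, and g denotes the Gauss sum. -/
open Finset

/-!
The left-hand side is the Jacobi sum `J(φχ, χ⁻¹) = ∑ₓ (φχ)(x) χ⁻¹(1 - x)`. Substituting
`x = s / (1 + s)` turns it into `∑ₛ (φχ)(s) φ(1 + s)`. On the other side, completing the square
shows that `t ↦ t² / (4(1 - t))` takes each value `b ≠ 0` exactly `1 + φ(b² + b)` times, so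
`∑ₜ χ(t² / (4(1 - t))) = ∑_b χ(b) (1 + φ(b) φ(1 + b))`, which is the same sum because
`∑_b χ(b) = 0`.
-/

section Field

variable {F : Type*} [Field F]

lemma div_four_mul_one_sub_eq_iff (hF : ringChar F ≠ 2) {b : F} (hb : b ≠ 0) (t : F) :
    t ^ 2 / (4 * (1 - t)) = b ↔ ((t + 2 * b) / 2) ^ 2 = b ^ 2 + b := by
  have h2 : (2 : F) ≠ 0 := Ring.two_ne_zero hF
  rcases eq_or_ne t 1 with rfl | ht
  · simp only [sub_self, mul_zero, div_zero, hb.symm, false_iff]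
    intro h
    exact one_ne_zero (by field_simp at h; linear_combination h)
  · have h4 : (4 : F) = 2 ^ 2 := by norm_num
    rw [div_eq_iff (mul_ne_zero (h4 ▸ pow_ne_zero 2 h2) (sub_ne_zero.mpr ht.symm)), div_pow,
      div_eq_iff (pow_ne_zero 2 h2)]
    constructor <;> intro h <;> linear_combination h

variable [Fintype F]

lemma jacobiSum_eq_sum_mul_inv_one_add {R : Type*} [CommRing R] [Nontrivial R]
    (χ ψ : MulChar F R) :
    jacobiSum χ ψ = ∑ s : F, χ s * (χ * ψ)⁻¹ (1 + s) := by
  classical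
  rw [jacobiSum,
    ← sum_erase (f := fun x ↦ χ x * ψ (1 - x)) univ (a := 1) (by simp [MulChar.map_zero]),
    ← sum_erase (f := fun s ↦ χ s * (χ * ψ)⁻¹ (1 + s)) univ (a := -1) (by simp [MulChar.map_zero])]
  symm
  refine sum_nbij' (fun s ↦ s / (1 + s)) (fun x ↦ x / (1 - x)) ?_ ?_ ?_ ?_ ?_ <;>
    simp only [mem_erase, mem_univ, and_true]
  · intro s hs h
    have hs' : 1 + s ≠ 0 := fun h ↦ hs (by linear_combination h)
    rw [div_eq_one_iff_eq hs'] at h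
    exact one_ne_zero (by linear_combination -h)
  · intro x hx h
    rw [div_eq_iff (sub_ne_zero.mpr hx.symm)] at h
    exact one_ne_zero (by linear_combination h)
  · intro s hs
    have hs' : 1 + s ≠ 0 := fun h ↦ hs (by linear_combination h)
    field_simp
    ring
  · intro x hx
    have hx' : 1 - x ≠ 0 := sub_ne_zero.mpr hx.symm
    field_simp
    ring
  · intro s hs
    have hs' : 1 + s ≠ 0 := fun h ↦ hs (by linear_combination h)
    have h_one_sub : 1 - s / (1 + s) = (1 + s)⁻¹ := by field_simp; ring
    rw [h_one_sub, MulChar.inv_apply', div_eq_mul_inv, map_mul, MulChar.mul_apply, mul_assoc]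

variable [DecidableEq F]

lemma card_filter_div_four_mul_one_sub_eq (hF : ringChar F ≠ 2) {b : F} (hb : b ≠ 0) :
    (#{t : F | t ^ 2 / (4 * (1 - t)) = b} : ℤ) = quadraticChar F (b ^ 2 + b) + 1 := by
  have h2 : (2 : F) ≠ 0 := Ring.two_ne_zero hF
  rw [← quadraticChar_card_sqrts hF, Set.toFinset_ofPred, Nat.cast_inj]
  refine card_nbij' (fun t ↦ (t + 2 * b) / 2) (fun u ↦ 2 * u - 2 * b) ?_ ?_ ?_ ?_
  · intro t ht
    simp only [coe_filter, mem_univ, true_and, Set.mem_ofPred_eq] at ht ⊢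
    exact (div_four_mul_one_sub_eq_iff hF hb t).mp ht
  · intro u hu
    simp only [coe_filter, mem_univ, true_and, Set.mem_ofPred_eq] at hu ⊢
    rw [div_four_mul_one_sub_eq_iff hF hb]
    field_simp
    linear_combination hu
  · intro t _
    field_simp
    ring
  · intro u _
    field_simp
    ring

lemma sum_apply_div_four_mul_one_sub {R : Type*} [CommRing R] [IsDomain R]
    (hF : ringChar F ≠ 2) {χ : MulChar F R} (hχ : χ ≠ 1) :
    ∑ t : F, χ (t ^ 2 / (4 * (1 - t))) =
      ∑ s : F, ((quadraticChar F).ringHomComp (Int.castRingHom R) * χ) s *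
        (quadraticChar F).ringHomComp (Int.castRingHom R) (1 + s) := by
  set φ := (quadraticChar F).ringHomComp (Int.castRingHom R)
  have h_fiber (b : F) :
      #{t : F | t ^ 2 / (4 * (1 - t)) = b} • χ b = (φ * χ) b * φ (1 + b) + χ b := by
    rcases eq_or_ne b 0 with rfl | hb
    · simp [MulChar.map_zero]
    · rw [nsmul_eq_mul, ← Int.cast_natCast, card_filter_div_four_mul_one_sub_eq hF hb,
        show b ^ 2 + b = b * (1 + b) by ring]
      simp only [φ, MulChar.mul_apply, MulChar.ringHomComp_apply, map_mul, Int.cast_add,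
        Int.cast_one, eq_intCast, Int.cast_mul]
      ring
  rw [← sum_fiberwise' univ (fun t ↦ t ^ 2 / (4 * (1 - t))) χ]
  simp only [sum_const, h_fiber, sum_add_distrib, MulChar.sum_eq_zero_of_ne_one hχ, add_zero]

end Field

lemma gaussSum_zmodChar {p : ℕ} [NeZero p] {R : Type*} [CommRing R] {ζ : R} (hζ : ζ ^ p = 1)
    (χ : MulChar (ZMod p) R) :
    gaussSum χ (AddChar.zmodChar p hζ) = ∑ x : ZMod p, χ x * ζ ^ x.val :=
  rfl

theorem stmt_4 (p : ℕ) [Fact p.Prime] (hp : Odd p)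
    (ζ : ℂ) (hζ : IsPrimitiveRoot ζ p)
    (χ : MulChar (ZMod p) ℂ) (hχ : χ ≠ 1) :
    letI φ : MulChar (ZMod p) ℂ := (quadraticChar (ZMod p)).ringHomComp (Int.castRingHom ℂ)
    (∑ x : ZMod p, (φ * χ) x * ζ ^ x.val) * (∑ x : ZMod p, χ⁻¹ x * ζ ^ x.val)
        / (∑ x : ZMod p, φ x * ζ ^ x.val)
      = ∑ t ∈ univ.filter (fun t : ZMod p => t ≠ 0 ∧ t ≠ 1),
          χ (t ^ 2 / (4 * (1 - t))) := by
  set φ : MulChar (ZMod p) ℂ := (quadraticChar (ZMod p)).ringHomComp (Int.castRingHom ℂ)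
  have hF : ringChar (ZMod p) ≠ 2 := by
    rw [ZMod.ringChar_zmod_n]
    rintro rfl
    exact Nat.not_odd_iff_even.mpr even_two hp
  have hφ : φ * χ * χ⁻¹ = φ := mul_inv_cancel_right φ χ
  have hφ_ne_one : φ * χ * χ⁻¹ ≠ 1 := by
    rw [hφ]
    exact (MulChar.ringHomComp_ne_one_iff (f := Int.castRingHom ℂ) Int.cast_injective).mpr
      (quadraticChar_ne_one hF)
  have hJ := jacobiSum_eq_gaussSum_mul_gaussSum_div_gaussSum
    (by simpa using (Fact.out : p.Prime).ne_zero) hφ_ne_one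
    (AddChar.zmodChar_primitive_of_primitive_root p hζ)
  rw [hφ] at hJ
  rw [← gaussSum_zmodChar hζ.pow_eq_one, ← gaussSum_zmodChar hζ.pow_eq_one,
    ← gaussSum_zmodChar hζ.pow_eq_one, ← hJ, jacobiSum_eq_sum_mul_inv_one_add, hφ,
    ((quadraticChar_isQuadratic _).comp _).inv, ← sum_apply_div_four_mul_one_sub hF hχ]
  refine (sum_filter_of_ne fun t _ ht ↦ ⟨?_, ?_⟩).symm <;> rintro rfl <;>
    simp [MulChar.map_zero] at ht
end

section
/- Let p be an odd prime, φ the quadratic character of F_p, and χ any multiplicative character of F_p (including the trivial one). Then g(φχ)·g(χ⁻¹)/g(φ) = Σ_{t=2}^{p-1} χ(-t)·φ(t(t-1)), where the sum is over t ∈ F_p with t ≠ 0, 1, and g denotes the Gauss sum. -/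
open Finset

/-!
The Gauss sums are those of the additive character `x ↦ ζ ^ x.val`, and since `φ` is nontrivial
for odd `p`, the left side is the Jacobi sum `J(φχ, χ⁻¹)`. Substituting `x = t / (t - 1)` in `J(φχ, χ⁻¹) = ∑ (φχ)(x) χ⁻¹(1 - x)`
gives `1 - x = -(t - 1)⁻¹`, and since `φ` is quadratic, `φ(t / (t - 1)) = φ(t (t - 1))`.
-/

theorem sum_mulChar_mul_pow_val_eq_gaussSum {R : Type*} [CommRing R] {n : ℕ} [NeZero n]
    {ζ : R} (hζ : ζ ^ n = 1) (χ : MulChar (ZMod n) R) :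
    ∑ x : ZMod n, χ x * ζ ^ x.val = gaussSum χ (AddChar.zmodChar n hζ) := by
  simp only [gaussSum, AddChar.zmodChar_apply]

section DivSubOne

variable {F : Type*} [Field F]

theorem div_sub_one_ne_one (t : F) : t / (t - 1) ≠ 1 := by
  by_cases ht : t - 1 = 0
  · simp [ht]
  · rw [ne_eq, div_eq_one_iff_eq ht]
    intro h
    exact one_ne_zero (by linear_combination h : (1 : F) = 0)

theorem div_sub_one_div_div_sub_one_sub_one {t : F} (ht : t ≠ 1) :
    t / (t - 1) / (t / (t - 1) - 1) = t := by
  have h1 : t - 1 ≠ 0 := sub_ne_zero.mpr ht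
  field_simp
  ring

theorem sum_compl_zero_one_comp_div_sub_one [Fintype F] [DecidableEq F] {M : Type*}
    [AddCommMonoid M] (f : F → M) :
    ∑ x ∈ univ \ {0, 1}, f x = ∑ t ∈ univ \ {0, 1}, f (t / (t - 1)) := by
  have hmem_iff (t : F) : t ∈ univ \ {0, 1} ↔ t ≠ 0 ∧ t ≠ 1 := by simp
  have hmem {t : F} (ht : t ∈ univ \ {0, 1}) : t / (t - 1) ∈ univ \ {0, 1} := by
    rw [hmem_iff] at ht ⊢
    exact ⟨div_ne_zero ht.1 (sub_ne_zero.mpr ht.2), div_sub_one_ne_one t⟩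
  have hinv {t : F} (ht : t ∈ univ \ {0, 1}) : t / (t - 1) / (t / (t - 1) - 1) = t :=
    div_sub_one_div_div_sub_one_sub_one ((hmem_iff t).mp ht).2
  exact sum_nbij' (fun t => t / (t - 1)) (fun t => t / (t - 1)) (fun _ => hmem) (fun _ => hmem)
    (fun _ => hinv) (fun _ => hinv) (fun _ ht => congrArg f (hinv ht).symm)

end DivSubOne

theorem jacobiSum_mul_inv_of_isQuadratic {F R : Type*} [Field F] [Fintype F] [DecidableEq F]
    [CommRing R] {φ : MulChar F R} (hφ : φ.IsQuadratic) (χ : MulChar F R) :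
    jacobiSum (φ * χ) χ⁻¹ = ∑ t ∈ univ \ {0, 1}, χ (-t) * φ (t * (t - 1)) := by
  rw [jacobiSum_eq_sum_sdiff, sum_compl_zero_one_comp_div_sub_one]
  refine sum_congr rfl fun t ht => ?_
  have h1 : t - 1 ≠ 0 := sub_ne_zero.mpr (by simp_all)
  have hχ : χ (t / (t - 1)) * χ⁻¹ (1 - t / (t - 1)) = χ (-t) := by
    rw [MulChar.inv_apply', ← map_mul]
    congr 1
    field_simp
    ring
  have hφ' : φ (t / (t - 1)) = φ (t * (t - 1)) := by
    rw [div_eq_mul_inv, map_mul, map_mul, ← MulChar.inv_apply', hφ.inv]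
  rw [MulChar.mul_apply, mul_assoc, hχ, hφ', mul_comm]

theorem stmt_5 (p : ℕ) [Fact p.Prime] (hp : Odd p)
    (ζ : ℂ) (hζ : IsPrimitiveRoot ζ p)
    (χ : MulChar (ZMod p) ℂ) :
    letI φ : MulChar (ZMod p) ℂ := (quadraticChar (ZMod p)).ringHomComp (Int.castRingHom ℂ)
    (∑ x : ZMod p, (φ * χ) x * ζ ^ x.val) * (∑ x : ZMod p, χ⁻¹ x * ζ ^ x.val)
        / (∑ x : ZMod p, φ x * ζ ^ x.val)
      = ∑ t ∈ univ.filter (fun t : ZMod p => t ≠ 0 ∧ t ≠ 1),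
          χ (-t) * φ (t * (t - 1)) := by
  set φ : MulChar (ZMod p) ℂ := (quadraticChar (ZMod p)).ringHomComp (Int.castRingHom ℂ)
  have hφ : φ.IsQuadratic := quadraticChar_isQuadratic (ZMod p) |>.comp _
  have hφ_ne_one : φ ≠ 1 := by
    rw [MulChar.ringHomComp_ne_one_iff (RingHom.injective_int _)]
    refine quadraticChar_ne_one ?_
    rw [ZMod.ringChar_zmod_n]
    rintro rfl
    exact Nat.not_odd_iff_even.mpr even_two hp
  have hcard : (Fintype.card (ZMod p) : ℂ) ≠ 0 := by
    simpa [ZMod.card] using (Fact.out : p.Prime).ne_zero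
  have hprod : φ * χ * χ⁻¹ = φ := by rw [mul_assoc, mul_inv_cancel, mul_one]
  have hjacobi := jacobiSum_eq_gaussSum_mul_gaussSum_div_gaussSum hcard
    (hprod ▸ hφ_ne_one) (AddChar.zmodChar_primitive_of_primitive_root p hζ)
  simp only [sum_mulChar_mul_pow_val_eq_gaussSum hζ.pow_eq_one]
  rw [hprod] at hjacobi
  rw [← hjacobi, jacobiSum_mul_inv_of_isQuadratic hφ]
  congr 1
  ext t
  simp
end

section
/- Let p be an odd prime, φ the quadratic character of F_p, and χ a nontrivial multiplicative character of F_p. Then g(φχ)·g(χ⁻¹)/g(φ) = χ⁻¹(4)·J(χ², χ⁻¹), where g denotes the Gauss sum and J the Jacobi sum. (Here it must be noted that g(χ²)g(χ⁻¹)/g(χ) = J(χ²,χ⁻¹) holds for both χ² trivial and nontrivial.) -/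
open Finset

private lemma sum_sq_aux {p : ℕ} [Fact p.Prime] (hp2 : p ≠ 2) (f : ZMod p → ℂ) :
    ∑ u : ZMod p, f (u ^ 2)
      = ∑ t : ZMod p, f t
        + ∑ t : ZMod p, ((quadraticChar (ZMod p) t : ℤ) : ℂ) * f t := by
  have hchar : ringChar (ZMod p) ≠ 2 := by rw [ZMod.ringChar_zmod_n]; exact hp2
  calc ∑ u : ZMod p, f (u ^ 2)
      = ∑ t : ZMod p, ∑ u ∈ univ.filter (fun u : ZMod p => u ^ 2 = t), f (u ^ 2) :=
        (Finset.sum_fiberwise _ _ _).symm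
    _ = ∑ t : ZMod p, ((univ.filter (fun u : ZMod p => u ^ 2 = t)).card : ℂ) * f t := by
        refine Finset.sum_congr rfl fun t _ => ?_
        rw [Finset.sum_congr rfl (fun u hu => by rw [(Finset.mem_filter.mp hu).2]),
          Finset.sum_const, nsmul_eq_mul]
    _ = _ := by
        rw [← Finset.sum_add_distrib]
        refine Finset.sum_congr rfl fun t _ => ?_
        have h := quadraticChar_card_sqrts hchar t
        have hcard : (univ.filter (fun u : ZMod p => u ^ 2 = t)).card
            = {x : ZMod p | x ^ 2 = t}.toFinset.card := by
          congr 1; ext x; simp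
        have h2 : ((univ.filter (fun u : ZMod p => u ^ 2 = t)).card : ℂ)
            = ((quadraticChar (ZMod p) t : ℤ) : ℂ) + 1 := by
          rw [hcard]
          exact_mod_cast congrArg (Int.cast : ℤ → ℂ) h
        rw [h2]; ring

private lemma key_jacobi {p : ℕ} [Fact p.Prime] (hp : Odd p)
    (χ : MulChar (ZMod p) ℂ) (hχ : χ ≠ 1) :
    jacobiSum ((quadraticChar (ZMod p)).ringHomComp (Int.castRingHom ℂ) * χ) χ⁻¹
      = χ⁻¹ 4 * jacobiSum (χ ^ 2) χ⁻¹ := by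
  set φ : MulChar (ZMod p) ℂ := (quadraticChar (ZMod p)).ringHomComp (Int.castRingHom ℂ) with hφ
  have hp2 : p ≠ 2 := by rintro rfl; exact (by decide : ¬ Odd 2) hp
  have h2 : (2 : ZMod p) ≠ 0 := by
    intro h
    have hd : (p : ℕ) ∣ 2 := (ZMod.natCast_eq_zero_iff 2 p).mp (by exact_mod_cast h)
    exact hp2 ((Nat.prime_dvd_prime_iff_eq (Fact.out : p.Prime) Nat.prime_two).mp hd)
  have h4 : (4 : ZMod p) ≠ 0 := by
    have : (4 : ZMod p) = 2 * 2 := by norm_num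
    rw [this]; exact mul_ne_zero h2 h2
  -- the pointwise identity
  have hpoint : ∀ u : ZMod p, u ≠ -1 →
      χ (u ^ 2) * χ⁻¹ (1 - u ^ 2)
        = χ⁻¹ 4 * (χ ((1 - (1 - u) / (1 + u)) ^ 2) * χ⁻¹ ((1 - u) / (1 + u))) := by
    intro u hu
    have h1u : (1 : ZMod p) + u ≠ 0 := by
      intro h; exact hu (by linear_combination h)
    rw [MulChar.inv_apply', MulChar.inv_apply', MulChar.inv_apply', ← map_mul, ← map_mul,
      ← map_mul]
    congr 1
    by_cases hu1 : u = 1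
    · subst hu1; norm_num
    · have h1u' : (1 : ZMod p) - u ≠ 0 := fun h => hu1 (by linear_combination -h)
      have hsq : (1 : ZMod p) - u ^ 2 ≠ 0 := by
        intro h
        rcases mul_eq_zero.mp (show ((1:ZMod p) - u) * (1 + u) = 0 by linear_combination h)
          with h' | h'
        exacts [h1u' h', h1u h']
      have hs : ((1 : ZMod p) - u) / (1 + u) ≠ 0 := div_ne_zero h1u' h1u
      field_simp
      ring
  -- the involution facts
  have hmem : ∀ u : ZMod p, u ≠ -1 → ((1 : ZMod p) - u) / (1 + u) ≠ -1 := by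
    intro u hu heq
    have h1u : (1 : ZMod p) + u ≠ 0 := fun h => hu (by linear_combination h)
    rw [div_eq_iff h1u] at heq
    exact h2 (by linear_combination heq)
  have hinv : ∀ u : ZMod p, u ≠ -1 →
      (1 - ((1 : ZMod p) - u) / (1 + u)) / (1 + (1 - u) / (1 + u)) = u := by
    intro u hu
    have h1u : (1 : ZMod p) + u ≠ 0 := fun h => hu (by linear_combination h)
    have e1 : 1 + ((1 : ZMod p) - u) / (1 + u) = 2 / (1 + u) := by
      field_simp; ring
    have e2 : 1 - ((1 : ZMod p) - u) / (1 + u) = 2 * u / (1 + u) := by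
      field_simp; ring
    rw [e1, e2]
    rw [div_div_div_eq, mul_comm ((2 : ZMod p) * u), mul_div_mul_left _ _ h1u,
      mul_comm, mul_div_assoc, div_self h2, mul_one]
  -- χ⁻¹ and χ cancel on units
  have hc4 : χ⁻¹ 4 * χ 4 = 1 := by
    rw [MulChar.inv_apply', ← map_mul, inv_mul_cancel₀ h4, map_one]
  -- the L sum
  set L : ℂ := ∑ u : ZMod p, χ (u ^ 2) * χ⁻¹ (1 - u ^ 2) with hL
  -- Claim A
  have hA : L = jacobiSum χ χ⁻¹ + jacobiSum (φ * χ) χ⁻¹ := by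
    have := sum_sq_aux hp2 (fun t => χ t * χ⁻¹ (1 - t))
    rw [hL, this, jacobiSum, jacobiSum]
    congr 1
    refine Finset.sum_congr rfl fun t _ => ?_
    simp only [hφ, MulChar.coeToFun_mul, Pi.mul_apply, MulChar.ringHomComp_apply,
      eq_intCast]
    ring
  -- Claim B
  have hB : L = χ⁻¹ 4 * jacobiSum (χ ^ 2) χ⁻¹ - χ (-1) := by
    have hzero : χ ((-1 : ZMod p) ^ 2) * χ⁻¹ (1 - (-1 : ZMod p) ^ 2) = 0 := by
      have h1 : ((-1 : ZMod p)) ^ 2 = 1 := by ring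
      rw [h1, sub_self, MulChar.map_nonunit χ⁻¹ not_isUnit_zero, mul_zero]
    have hL' : L = ∑ u ∈ (univ : Finset (ZMod p)).erase (-1), χ (u ^ 2) * χ⁻¹ (1 - u ^ 2) := by
      rw [hL]
      exact (Finset.sum_erase (f := fun u : ZMod p => χ (u ^ 2) * χ⁻¹ (1 - u ^ 2))
        univ hzero).symm
    have hbij : ∑ u ∈ (univ : Finset (ZMod p)).erase (-1), χ (u ^ 2) * χ⁻¹ (1 - u ^ 2)
        = ∑ s ∈ (univ : Finset (ZMod p)).erase (-1),
            χ⁻¹ 4 * (χ ((1 - s) ^ 2) * χ⁻¹ s) := by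
      refine Finset.sum_nbij' (fun u => (1 - u) / (1 + u)) (fun s => (1 - s) / (1 + s))
        ?_ ?_ ?_ ?_ ?_
      · intro u hu
        rw [Finset.mem_erase] at hu ⊢
        exact ⟨hmem u hu.1, Finset.mem_univ _⟩
      · intro s hs
        rw [Finset.mem_erase] at hs ⊢
        exact ⟨hmem s hs.1, Finset.mem_univ _⟩
      · intro u hu; exact hinv u (Finset.mem_erase.mp hu).1
      · intro s hs; exact hinv s (Finset.mem_erase.mp hs).1
      · intro u hu
        rw [hpoint u (Finset.mem_erase.mp hu).1]
    have hsum : ∑ s ∈ (univ : Finset (ZMod p)).erase (-1),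
          χ⁻¹ 4 * (χ ((1 - s) ^ 2) * χ⁻¹ s)
        = (∑ s : ZMod p, χ⁻¹ 4 * (χ ((1 - s) ^ 2) * χ⁻¹ s))
            - χ⁻¹ 4 * (χ ((1 - (-1 : ZMod p)) ^ 2) * χ⁻¹ (-1)) :=
      Finset.sum_erase_eq_sub (Finset.mem_univ _)
    have hterm : χ⁻¹ 4 * (χ ((1 - (-1 : ZMod p)) ^ 2) * χ⁻¹ (-1)) = χ (-1) := by
      have : ((1 : ZMod p) - (-1)) ^ 2 = 4 := by ring
      rw [this, ← mul_assoc, hc4, one_mul, MulChar.inv_apply', inv_neg, inv_one]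
    have hjac : (∑ s : ZMod p, χ⁻¹ 4 * (χ ((1 - s) ^ 2) * χ⁻¹ s))
        = χ⁻¹ 4 * jacobiSum (χ ^ 2) χ⁻¹ := by
      rw [← Finset.mul_sum]
      congr 1
      rw [jacobiSum_comm, jacobiSum]
      refine Finset.sum_congr rfl fun s _ => ?_
      rw [map_pow]
      simp only [pow_two, MulChar.coeToFun_mul, Pi.mul_apply]
      ring
    rw [hL', hbij, hsum, hterm, hjac]
  have hJ : jacobiSum χ χ⁻¹ = -χ (-1) := jacobiSum_nontrivial_inv hχ
  rw [hJ] at hA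
  linear_combination hB - hA

theorem stmt_14 (p : ℕ) [Fact p.Prime] (hp : Odd p)
    (ζ : ℂ) (hζ : IsPrimitiveRoot ζ p)
    (χ : MulChar (ZMod p) ℂ) (hχ : χ ≠ 1) :
    letI φ : MulChar (ZMod p) ℂ := (quadraticChar (ZMod p)).ringHomComp (Int.castRingHom ℂ)
    (∑ x : ZMod p, (φ * χ) x * ζ ^ x.val) * (∑ x : ZMod p, χ⁻¹ x * ζ ^ x.val)
        / (∑ x : ZMod p, φ x * ζ ^ x.val)
      = χ⁻¹ 4 * (∑ t : ZMod p, (χ ^ 2) t * χ⁻¹ (1 - t)) := by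
  set φ : MulChar (ZMod p) ℂ := (quadraticChar (ZMod p)).ringHomComp (Int.castRingHom ℂ)
    with hφdef
  have hp2 : p ≠ 2 := by rintro rfl; exact (by decide : ¬ Odd 2) hp
  have hp0 : p ≠ 0 := (Fact.out : p.Prime).ne_zero
  haveI : NeZero p := ⟨hp0⟩
  have hζp : ζ ^ p = 1 := hζ.pow_eq_one
  set ψ : AddChar (ZMod p) ℂ := AddChar.zmodChar p hζp with hψdef
  have hprim : ψ.IsPrimitive := AddChar.zmodChar_primitive_of_primitive_root p hζ
  have e1 : ∀ c : MulChar (ZMod p) ℂ,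
      (∑ x : ZMod p, c x * ζ ^ x.val) = gaussSum c ψ := by
    intro c
    refine Finset.sum_congr rfl fun x _ => ?_
    rw [hψdef, AddChar.zmodChar_apply]
  rw [e1, e1, e1]
  have hφ1 : φ ≠ 1 := by
    intro h
    have hchar : ringChar (ZMod p) ≠ 2 := by rw [ZMod.ringChar_zmod_n]; exact hp2
    exact quadraticChar_ne_one hchar
      ((MulChar.ringHomComp_eq_one_iff (f := Int.castRingHom ℂ) Int.cast_injective).mp h)
  have hcard : ((Fintype.card (ZMod p) : ℂ)) ≠ 0 := by
    rw [ZMod.card]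
    exact_mod_cast hp0
  have hg : gaussSum φ ψ ≠ 0 := gaussSum_ne_zero_of_nontrivial hcard hφ1 hprim
  rw [div_eq_iff hg]
  have hmul : (φ * χ) * χ⁻¹ = φ := by rw [mul_assoc, mul_inv_cancel, mul_one]
  have := jacobiSum_mul_nontrivial (χ := φ * χ) (φ := χ⁻¹) (by rw [hmul]; exact hφ1) ψ
  rw [hmul] at this
  have hkey := key_jacobi hp χ hχ
  have hrhs : (∑ t : ZMod p, (χ ^ 2) t * χ⁻¹ (1 - t)) = jacobiSum (χ ^ 2) χ⁻¹ := rfl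
  rw [hrhs]
  calc gaussSum (φ * χ) ψ * gaussSum χ⁻¹ ψ
      = gaussSum φ ψ * jacobiSum (φ * χ) χ⁻¹ := this.symm
    _ = χ⁻¹ 4 * jacobiSum (χ ^ 2) χ⁻¹ * gaussSum φ ψ := by rw [hkey]; ring
end
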